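/- arXiv:1902.10184 — 2 statements merged into one kernel-verified Lean document; each statement's English description precedes it below -/
import Mathlib

section
/- Let A ∈ ℝ^{n×n}. The discrete-time LTI system x(k+1) = A x(k) is convergent if and only if there exist a symmetric positive definite matrix Q ∈ ℝ^{n×n} and a symmetric positive semidefinite matrix P ∈ ℝ^{n×n} with rank(P) = n − dim ker(A − I), such that AᵀPA − P + (A − I)ᵀ Q (A − I) is negative semidefinite. -/
open Matrix Filter

/-- The DT LTI system `x(k+1) = A x(k)` is convergent: every trajectory `A^k x₀` has a limit. -/
def DTConvergent {n : ℕ} (A : Matrix (Fin n) (Fin n) ℝ) : Prop :=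
  ∀ x0 : Fin n → ℝ, ∃ xbar : Fin n → ℝ,
    Tendsto (fun k : ℕ => (A ^ k) *ᵥ x0) atTop (nhds xbar)

/-- The DT system `x(k+1) = B x(k)` is marginally stable. -/
def DTMarginallyStable {n : ℕ} (B : Matrix (Fin n) (Fin n) ℝ) : Prop :=
  ∃ C : ℝ, 0 ≤ C ∧ ∀ (k : ℕ) (x : Fin n → ℝ), ‖(B ^ k) *ᵥ x‖ ≤ C * ‖x‖

/-- The CT LTI system `ẋ = A x` is convergent: every trajectory `exp(tA) x₀` has a limit. -/
noncomputable def CTConvergent {n : ℕ} (A : Matrix (Fin n) (Fin n) ℝ) : Prop :=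
  ∀ x0 : Fin n → ℝ, ∃ xbar : Fin n → ℝ,
    Tendsto (fun t : ℝ => (NormedSpace.exp (t • A)) *ᵥ x0) atTop (nhds xbar)

/-- The CT system `ẋ = B x` is marginally stable. -/
noncomputable def CTMarginallyStable {n : ℕ} (B : Matrix (Fin n) (Fin n) ℝ) : Prop :=
  ∃ C : ℝ, 0 ≤ C ∧ ∀ t : ℝ, 0 ≤ t → ∀ x : Fin n → ℝ,
    ‖(NormedSpace.exp (t • B)) *ᵥ x‖ ≤ C * ‖x‖

/-!
If `A ^ k → L`, then `L` is a projection with `A L = L A = L`. Pick `N` with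
`‖A ^ N - L‖² ≤ 1/2` and put `P = ∑_{k<N} (A ^ k - L)ᵀ (A ^ k - L)`: telescoping gives
`AᵀPA - P = (A ^ N - L)ᵀ(A ^ N - L) - (1 - L)ᵀ(1 - L)`, and since `A ^ N - L` and `A - 1` both
factor through `1 - L`, the inequality holds with `Q = ε • 1` for small `ε`. The kernel of `P` is
the fixed space `ker (A - 1)`, which is the rank condition.

Conversely, with `Q ≥ r • 1`, the function `V z = zᵀ P z` decreases along trajectories by at
least `r ‖(A - 1) z‖²`. This gives `ker P ≤ ker (A - 1)`, hence equality by the rank condition. A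
fixed vector `v = (A - 1) w` then lies in `ker P`, so `V (A w) = V w` and `v = 0`; thus
`ker (A - 1)` and `range (A - 1)` are complementary. On the invariant subspace `range (A - 1)`,
where `A - 1` is injective, the decrements of `V` are summable, so trajectories there tend to `0`.
-/

open scoped Topology

lemma summable_of_succ_add_le {a b : ℕ → ℝ} (ha : ∀ k, 0 ≤ a k) (hb : ∀ k, 0 ≤ b k)
    (h : ∀ k, a (k + 1) + b k ≤ a k) : Summable b := by
  have hsum : ∀ N, ∑ k ∈ Finset.range N, b k + a N ≤ a 0 := by
    intro N
    induction N with
    | zero => simp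
    | succ N ih => rw [Finset.sum_range_succ]; linarith [h N]
  exact summable_of_sum_range_le hb fun N => by linarith [hsum N, ha N]

lemma Submodule.tendsto_zero_of_disjoint_ker {𝕜 E F : Type*} [NontriviallyNormedField 𝕜]
    [CompleteSpace 𝕜] [NormedAddCommGroup E] [NormedSpace 𝕜 E] [FiniteDimensional 𝕜 E]
    [NormedAddCommGroup F] [NormedSpace 𝕜 F] {f : E →ₗ[𝕜] F} {W : Submodule 𝕜 E}
    (hW : Disjoint W (LinearMap.ker f)) {α : Type*} {l : Filter α} {u : α → E}
    (hu : ∀ k, u k ∈ W) (hf : Tendsto (fun k => f (u k)) l (𝓝 0)) : Tendsto u l (𝓝 0) := by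
  have hker : LinearMap.ker (f.domRestrict W) = ⊥ := by
    rwa [LinearMap.ker_domRestrict, ← Submodule.disjoint_iff_comap_eq_bot]
  obtain ⟨K, -, hK⟩ := (f.domRestrict W).exists_antilipschitzWith hker
  refine squeeze_zero_norm (fun k => ?_) (by simpa using hf.norm.const_mul (K : ℝ))
  exact (LinearMap.toContinuousLinearMap (f.domRestrict W)).bound_of_antilipschitz hK ⟨u k, hu k⟩

section PowLimit

variable {M : Type*} [Monoid M] [TopologicalSpace M] [ContinuousMul M] [T2Space M] {a l : M}

lemma mul_eq_of_tendsto_pow (h : Tendsto (fun k => a ^ k) atTop (𝓝 l)) : a * l = l :=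
  tendsto_nhds_unique (h.const_mul a) <| by
    simpa [Function.comp_def, pow_succ'] using h.comp (tendsto_add_atTop_nat 1)

lemma mul_eq_of_tendsto_pow' (h : Tendsto (fun k => a ^ k) atTop (𝓝 l)) : l * a = l :=
  tendsto_nhds_unique (h.mul_const a) <| by
    simpa [Function.comp_def, pow_succ] using h.comp (tendsto_add_atTop_nat 1)

lemma pow_mul_eq_of_tendsto_pow (h : Tendsto (fun k => a ^ k) atTop (𝓝 l)) (k : ℕ) :
    a ^ k * l = l := by
  induction k with
  | zero => simp
  | succ k ih => rw [pow_succ, mul_assoc, mul_eq_of_tendsto_pow h, ih]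

lemma isIdempotentElem_of_tendsto_pow (h : Tendsto (fun k => a ^ k) atTop (𝓝 l)) :
    IsIdempotentElem l :=
  tendsto_nhds_unique (h.mul_const l) (by simp [pow_mul_eq_of_tendsto_pow h])

end PowLimit

namespace Matrix

variable {ι : Type*} [Fintype ι]

lemma dotProduct_self_nonneg {R : Type*} [Ring R] [LinearOrder R] [IsStrictOrderedRing R]
    (v : ι → R) : 0 ≤ v ⬝ᵥ v :=
  Finset.sum_nonneg fun i _ => mul_self_nonneg (v i)

lemma dotProduct_self_eq_norm_sq (v : ι → ℝ) : v ⬝ᵥ v = ‖WithLp.toLp 2 v‖ ^ 2 := by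
  rw [EuclideanSpace.norm_eq, Real.sq_sqrt (by positivity)]
  simp [dotProduct, sq]

lemma tendsto_zero_of_dotProduct_self {α : Type*} {l : Filter α} {v : α → ι → ℝ}
    (h : Tendsto (fun k => v k ⬝ᵥ v k) l (𝓝 0)) : Tendsto v l (𝓝 0) := by
  have hLp : Tendsto (fun k => WithLp.toLp 2 (v k)) l (𝓝 0) := by
    rw [tendsto_zero_iff_norm_tendsto_zero]
    simpa [dotProduct_self_eq_norm_sq] using h.sqrt
  simpa [Function.comp_def] using ((PiLp.continuous_ofLp 2 fun _ : ι => ℝ).tendsto 0).comp hLp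

lemma dotProduct_transpose_mul_mul_mulVec {R κ : Type*} [CommSemiring R] [Fintype κ]
    (B : Matrix κ ι R) (P : Matrix κ κ R) (x : ι → R) :
    x ⬝ᵥ (Bᵀ * P * B) *ᵥ x = (B *ᵥ x) ⬝ᵥ P *ᵥ (B *ᵥ x) := by
  rw [← mulVec_mulVec, ← mulVec_mulVec, dotProduct_mulVec, vecMul_transpose]

lemma dotProduct_sum_transpose_mul_self_mulVec {α : Type*} (s : Finset α)
    (C : α → Matrix ι ι ℝ) (x : ι → ℝ) :
    x ⬝ᵥ (∑ k ∈ s, (C k)ᵀ * C k) *ᵥ x = ∑ k ∈ s, (C k *ᵥ x) ⬝ᵥ (C k *ᵥ x) := by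
  simp [sum_mulVec, dotProduct_sum, ← mulVec_mulVec, dotProduct_mulVec _ (C _)ᵀ, vecMul_transpose]

lemma rank_add_finrank_ker {K : Type*} [Field K] (M : Matrix ι ι K) :
    M.rank + Module.finrank K (LinearMap.ker M.mulVecLin) = Fintype.card ι := by
  rw [rank, LinearMap.finrank_range_add_finrank_ker, Module.finrank_fintype_fun_eq_card]

variable [DecidableEq ι]

lemma pow_mulVec_eq_self {R : Type*} [CommSemiring R] {A : Matrix ι ι R} {x : ι → R}
    (h : A *ᵥ x = x) (k : ℕ) : A ^ k *ᵥ x = x := by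
  induction k with
  | zero => simp
  | succ k ih => rw [pow_succ, ← mulVec_mulVec, h, ih]

lemma mem_ker_sub_one_iff {R : Type*} [CommRing R] {A : Matrix ι ι R} {x : ι → R} :
    x ∈ LinearMap.ker (A - 1).mulVecLin ↔ A *ᵥ x = x := by
  simp [sub_eq_zero]

lemma mulVec_eq_self_of_tendsto_pow {A L : Matrix ι ι ℝ}
    (hL : Tendsto (fun k => A ^ k) atTop (𝓝 L)) {x : ι → ℝ} (hx : A *ᵥ x = x) : L *ᵥ x = x := by
  have h : Tendsto (fun k => A ^ k *ᵥ x) atTop (𝓝 (L *ᵥ x)) :=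
    ((continuous_id.matrix_mulVec continuous_const).tendsto L).comp hL
  simp only [pow_mulVec_eq_self hx] at h
  exact tendsto_nhds_unique h tendsto_const_nhds

open scoped Matrix.Norms.L2Operator in
lemma dotProduct_mulVec_self_le {κ : Type*} [Fintype κ] (B : Matrix κ ι ℝ) (x : ι → ℝ) :
    (B *ᵥ x) ⬝ᵥ (B *ᵥ x) ≤ ‖B‖ ^ 2 * (x ⬝ᵥ x) := by
  rw [dotProduct_self_eq_norm_sq, dotProduct_self_eq_norm_sq, ← mul_pow]
  exact pow_le_pow_left₀ (norm_nonneg _) (B.l2_opNorm_mulVec (WithLp.toLp 2 x)) 2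

open scoped MatrixOrder in
lemma PosDef.exists_pos_mul_dotProduct_self_le {Q : Matrix ι ι ℝ} (hQ : Q.PosDef) :
    ∃ r > 0, ∀ y, r * (y ⬝ᵥ y) ≤ y ⬝ᵥ Q *ᵥ y := by
  obtain ⟨r, hr, hrQ⟩ : ∃ r : ℝ, r > 0 ∧ r • (1 : Matrix ι ι ℝ) ≤ Q := by
    rcases subsingleton_or_nontrivial (Matrix ι ι ℝ) with h | h
    · exact ⟨1, one_pos, le_of_eq (Subsingleton.elim _ _)⟩
    have h := hQ.isStrictlyPositive
    simpa [Algebra.algebraMap_eq_smul_one] using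
      (CFC.exists_pos_algebraMap_le_iff h.isSelfAdjoint).2 fun x hx ↦ h.spectrum_pos hx
  refine ⟨r, hr, fun y => ?_⟩
  have := (le_iff.1 hrQ).dotProduct_mulVec_nonneg y
  simp only [star_trivial, sub_mulVec, dotProduct_sub, smul_mulVec, one_mulVec,
    dotProduct_smul, smul_eq_mul] at this
  linarith

lemma posSemidef_neg_lyapunov_iff {A P Q : Matrix ι ι ℝ} (hP : P.IsHermitian)
    (hQ : Q.IsHermitian) :
    (-(Aᵀ * P * A - P + (A - 1)ᵀ * Q * (A - 1))).PosSemidef ↔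
      ∀ z, (A *ᵥ z) ⬝ᵥ P *ᵥ (A *ᵥ z) + (A - 1) *ᵥ z ⬝ᵥ Q *ᵥ ((A - 1) *ᵥ z) ≤ z ⬝ᵥ P *ᵥ z := by
  have hherm : (-(Aᵀ * P * A - P + (A - 1)ᵀ * Q * (A - 1))).IsHermitian := by
    simp only [← conjTranspose_eq_transpose_of_trivial]
    exact (((isHermitian_conjTranspose_mul_mul A hP).sub hP).add
      (isHermitian_conjTranspose_mul_mul (A - 1) hQ)).neg
  simp only [posSemidef_iff_dotProduct_mulVec, hherm, true_and, star_trivial, neg_mulVec,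
    add_mulVec, sub_mulVec, dotProduct_neg, dotProduct_add, dotProduct_sub,
    dotProduct_transpose_mul_mul_mulVec]
  exact forall_congr' fun z => by constructor <;> intro h <;> linarith

def LyapunovDecrease (A P : Matrix ι ι ℝ) (r : ℝ) : Prop :=
  ∀ z, (A *ᵥ z) ⬝ᵥ P *ᵥ (A *ᵥ z) + r * ((A - 1) *ᵥ z ⬝ᵥ (A - 1) *ᵥ z) ≤ z ⬝ᵥ P *ᵥ z

namespace LyapunovDecrease

variable {A P : Matrix ι ι ℝ} {r : ℝ}

lemma ker_le (hV : LyapunovDecrease A P r) (hr : 0 < r) (hP : P.PosSemidef) :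
    LinearMap.ker P.mulVecLin ≤ LinearMap.ker (A - 1).mulVecLin := by
  intro x hx
  rw [LinearMap.mem_ker, mulVecLin_apply] at hx ⊢
  have hAx : 0 ≤ (A *ᵥ x) ⬝ᵥ P *ᵥ (A *ᵥ x) := by
    simpa using hP.dotProduct_mulVec_nonneg (A *ᵥ x)
  have hle := hV x
  rw [hx, dotProduct_zero] at hle
  have hnonneg := dotProduct_self_nonneg ((A - 1) *ᵥ x)
  exact dotProduct_self_eq_zero.1 (by nlinarith)

lemma disjoint_ker_range (hV : LyapunovDecrease A P r) (hr : 0 < r) (hP : P.IsHermitian)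
    (hK : LinearMap.ker (A - 1).mulVecLin ≤ LinearMap.ker P.mulVecLin) :
    Disjoint (LinearMap.ker (A - 1).mulVecLin) (LinearMap.range (A - 1).mulVecLin) := by
  rw [Submodule.disjoint_def]
  rintro _ hv ⟨w, rfl⟩
  have hPv : P *ᵥ ((A - 1) *ᵥ w) = 0 := hK hv
  change (A - 1) *ᵥ w = 0
  set v := (A - 1) *ᵥ w
  have hvP : v ᵥ* P = 0 := by
    have hPt : Pᵀ = P := (conjTranspose_eq_transpose_of_trivial P).symm.trans hP.eq
    rw [← hPt, vecMul_transpose, hPv]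
  have hAw : A *ᵥ w = w + v := by simp [v, sub_mulVec]
  have hle := hV w
  rw [hAw, mulVec_add, hPv, add_zero, add_dotProduct, dotProduct_mulVec v, hvP,
    zero_dotProduct, add_zero] at hle
  have hnonneg := dotProduct_self_nonneg v
  exact dotProduct_self_eq_zero.1 (by nlinarith)

lemma tendsto_pow_mulVec_zero (hV : LyapunovDecrease A P r) (hr : 0 < r) (hP : P.PosSemidef)
    (hdisj : Disjoint (LinearMap.ker (A - 1).mulVecLin) (LinearMap.range (A - 1).mulVecLin))
    {w : ι → ℝ} (hw : w ∈ LinearMap.range (A - 1).mulVecLin) :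
    Tendsto (fun k => A ^ k *ᵥ w) atTop (𝓝 0) := by
  obtain ⟨u, rfl⟩ := hw
  set x : ℕ → ι → ℝ := fun k => A ^ k *ᵥ (A - 1).mulVecLin u
  have hmem : ∀ k, x k ∈ LinearMap.range (A - 1).mulVecLin := fun k =>
    ⟨A ^ k *ᵥ u, by
      simp only [x, mulVecLin_apply, mulVec_mulVec,
        ((Commute.self_pow A k).sub_left (Commute.one_left _)).eq]⟩
  have hsum : Summable fun k => r * ((A - 1) *ᵥ x k ⬝ᵥ (A - 1) *ᵥ x k) := by
    refine summable_of_succ_add_le (a := fun k => x k ⬝ᵥ P *ᵥ x k)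
      (fun k => by simpa using hP.dotProduct_mulVec_nonneg (x k))
      (fun k => mul_nonneg hr.le (dotProduct_self_nonneg _)) fun k => ?_
    simpa [x, pow_succ', ← mulVec_mulVec] using hV (x k)
  have hdot := ((summable_mul_left_iff hr.ne').1 hsum).tendsto_atTop_zero
  exact Submodule.tendsto_zero_of_disjoint_ker hdisj.symm hmem
    (tendsto_zero_of_dotProduct_self hdot)

end LyapunovDecrease

open scoped Matrix.Norms.L2Operator in
lemma lyapunovDecrease_sum_of_tendsto_pow {A L : Matrix ι ι ℝ}
    (hL : Tendsto (fun k => A ^ k) atTop (𝓝 L)) {N : ℕ} (hN : ‖A ^ N - L‖ ^ 2 ≤ 1 / 2) :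
    LyapunovDecrease A (∑ k ∈ Finset.range N, (A ^ k - L)ᵀ * (A ^ k - L))
      (2 * (‖A - 1‖ ^ 2 + 1))⁻¹ := by
  intro z
  set C : ℕ → Matrix ι ι ℝ := fun k => A ^ k - L
  set y := (1 - L) *ᵥ z
  have hshift : ∀ k, C k *ᵥ (A *ᵥ z) = C (k + 1) *ᵥ z := fun k => by
    simp [C, mulVec_mulVec, sub_mul, pow_succ, mul_eq_of_tendsto_pow' hL]
  have htele : ∑ k ∈ Finset.range N, (C k *ᵥ (A *ᵥ z)) ⬝ᵥ (C k *ᵥ (A *ᵥ z)) + y ⬝ᵥ y =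
      ∑ k ∈ Finset.range N, (C k *ᵥ z) ⬝ᵥ (C k *ᵥ z) + (C N *ᵥ z) ⬝ᵥ (C N *ᵥ z) := by
    simp only [hshift]
    rw [← Finset.sum_range_succ, Finset.sum_range_succ']
    simp [C, y]
  -- `C N` and `A - 1` both factor through the projection `1 - L`
  have hCN : C N *ᵥ z = C N *ᵥ y := by
    simp [C, y, mulVec_mulVec, mul_sub, sub_mul, pow_mul_eq_of_tendsto_pow hL,
      (isIdempotentElem_of_tendsto_pow hL).eq]
  have hA1 : (A - 1) *ᵥ z = (A - 1) *ᵥ y := by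
    simp [y, mulVec_mulVec, mul_sub, sub_mul, mul_eq_of_tendsto_pow hL]
  have hy := dotProduct_self_nonneg y
  have hCy := dotProduct_mulVec_self_le (C N) y
  have hAy := dotProduct_mulVec_self_le (A - 1) y
  have hε : 0 < (2 * (‖A - 1‖ ^ 2 + 1))⁻¹ := by positivity
  have hεA : (2 * (‖A - 1‖ ^ 2 + 1))⁻¹ * ‖A - 1‖ ^ 2 ≤ 1 / 2 := by
    rw [inv_mul_le_iff₀ (by positivity)]
    nlinarith
  rw [dotProduct_sum_transpose_mul_self_mulVec, dotProduct_sum_transpose_mul_self_mulVec, hA1]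
  rw [hCN] at htele
  nlinarith [mul_le_mul_of_nonneg_right hN hy, mul_le_mul_of_nonneg_left hAy hε.le,
    mul_le_mul_of_nonneg_right hεA hy]

end Matrix

lemma DTConvergent.exists_tendsto_pow {n : ℕ} {A : Matrix (Fin n) (Fin n) ℝ}
    (h : DTConvergent A) : ∃ L, Tendsto (fun k => A ^ k) atTop (𝓝 L) := by
  choose xbar hx using h
  refine ⟨Matrix.of fun i j => xbar (Pi.single j 1) i, tendsto_pi_nhds.2 fun i =>
    tendsto_pi_nhds.2 fun j => ?_⟩
  simpa [mulVec_single_one] using tendsto_pi_nhds.1 (hx (Pi.single j 1)) i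

lemma DTConvergent.of_disjoint_ker_range {n : ℕ} {A : Matrix (Fin n) (Fin n) ℝ}
    (hdisj : Disjoint (LinearMap.ker (A - 1).mulVecLin) (LinearMap.range (A - 1).mulVecLin))
    (h : ∀ w ∈ LinearMap.range (A - 1).mulVecLin, Tendsto (fun k => A ^ k *ᵥ w) atTop (𝓝 0)) :
    DTConvergent A := by
  have hcompl : IsCompl (LinearMap.ker (A - 1).mulVecLin) (LinearMap.range (A - 1).mulVecLin) :=
    (Submodule.isCompl_iff_disjoint _ _ (by
      rw [add_comm, LinearMap.finrank_range_add_finrank_ker])).2 hdisj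
  intro x
  obtain ⟨u, hu, w, hw, rfl⟩ :=
    Submodule.mem_sup.1 (hcompl.sup_eq_top ▸ Submodule.mem_top (x := x))
  refine ⟨u, ?_⟩
  simpa [mulVec_add, pow_mulVec_eq_self (mem_ker_sub_one_iff.1 hu)] using (h w hw).const_add u

open scoped Matrix.Norms.L2Operator in
lemma exists_lyapunov_of_tendsto_pow {n : ℕ} {A L : Matrix (Fin n) (Fin n) ℝ}
    (hL : Tendsto (fun k => A ^ k) atTop (𝓝 L)) :
    ∃ (Q P : Matrix (Fin n) (Fin n) ℝ), Q.PosDef ∧ P.PosSemidef ∧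
      P.rank = n - Module.finrank ℝ (LinearMap.ker (A - 1).mulVecLin) ∧
      (-(Aᵀ * P * A - P + (A - 1)ᵀ * Q * (A - 1))).PosSemidef := by
  obtain ⟨N, hN⟩ : ∃ N, ‖A ^ N - L‖ ^ 2 ≤ 1 / 2 :=
    (((tendsto_iff_norm_sub_tendsto_zero.1 hL).pow 2).eventually
      (ge_mem_nhds (by norm_num : (0 : ℝ) ^ 2 < 1 / 2))).exists
  set ε : ℝ := (2 * (‖A - 1‖ ^ 2 + 1))⁻¹
  have hε : 0 < ε := by positivity
  set P := ∑ k ∈ Finset.range N, (A ^ k - L)ᵀ * (A ^ k - L)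
  have hV : LyapunovDecrease A P ε := lyapunovDecrease_sum_of_tendsto_pow hL hN
  have hP : P.PosSemidef := posSemidef_sum _ fun k _ => by
    simpa using posSemidef_conjTranspose_mul_self (A ^ k - L)
  have hker : LinearMap.ker P.mulVecLin = LinearMap.ker (A - 1).mulVecLin := by
    refine le_antisymm (hV.ker_le hε hP) fun x hx => ?_
    have hAx := mem_ker_sub_one_iff.1 hx
    simp [P, pow_mulVec_eq_self hAx, mulVec_eq_self_of_tendsto_pow hL hAx]
  have hQ : (ε • (1 : Matrix (Fin n) (Fin n) ℝ)).PosDef := PosDef.one.smul hε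
  refine ⟨ε • 1, P, hQ, hP, ?_, (posSemidef_neg_lyapunov_iff hP.isHermitian hQ.isHermitian).2 ?_⟩
  · have := P.rank_add_finrank_ker
    rw [hker, Fintype.card_fin] at this
    omega
  · intro z
    simp only [smul_mulVec, one_mulVec, dotProduct_smul, smul_eq_mul]
    exact hV z

/-- the DT LTI system is convergent iff there exist `Q ≻ 0` and `P ⪰ 0`
with `rank P = n − dim ker(A − I)` such that `AᵀPA − P + (A−I)ᵀQ(A−I) ⪯ 0`. -/
theorem dt_convergent_iff_lmi_rank
    (n : ℕ) (A : Matrix (Fin n) (Fin n) ℝ) :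
    DTConvergent A ↔
      ∃ (Q P : Matrix (Fin n) (Fin n) ℝ), Q.PosDef ∧ P.PosSemidef ∧
        P.rank = n - Module.finrank ℝ (LinearMap.ker (A - 1).mulVecLin) ∧
        (-(Aᵀ * P * A - P + (A - 1)ᵀ * Q * (A - 1))).PosSemidef := by
  refine ⟨fun h => ?_, fun ⟨Q, P, hQ, hP, hrank, hN⟩ => ?_⟩
  · obtain ⟨L, hL⟩ := h.exists_tendsto_pow
    exact exists_lyapunov_of_tendsto_pow hL
  obtain ⟨r, hr, hrQ⟩ := hQ.exists_pos_mul_dotProduct_self_le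
  have hV : LyapunovDecrease A P r := fun z => by
    linarith [(posSemidef_neg_lyapunov_iff hP.isHermitian hQ.isHermitian).1 hN z,
      hrQ ((A - 1) *ᵥ z)]
  have hK : LinearMap.ker P.mulVecLin = LinearMap.ker (A - 1).mulVecLin := by
    refine Submodule.eq_of_le_of_finrank_eq (hV.ker_le hr hP) ?_
    have hrank' := P.rank_add_finrank_ker
    have hle := Submodule.finrank_le (LinearMap.ker (A - 1).mulVecLin)
    simp only [Fintype.card_fin, Module.finrank_fin_fun] at hrank' hle
    omega
  have hdisj := hV.disjoint_ker_range hr hP.isHermitian hK.ge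
  exact DTConvergent.of_disjoint_ker_range hdisj fun w hw =>
    hV.tendsto_pow_mulVec_zero hr hP hdisj hw
end

section
/- If the difference inclusion generated by matrices A_1, …, A_M ∈ ℝ^{n×n} is weakly convergent, then it admits a weak convex Lyapunov function: there exists a norm N on ℝⁿ such that N(Aᵢ x) ≤ N(x) for every i ∈ {1, …, M} and every x ∈ ℝⁿ. -/
open Matrix Filter

/-- `w` lies in the unit simplex `W ⊆ ℝ^M`. -/
def InSimplex {M : ℕ} (w : Fin M → ℝ) : Prop :=
  (∀ i, 0 ≤ w i) ∧ ∑ i, w i = 1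

/-- The convex combination `A(w) = ∑ᵢ wᵢ Aᵢ`. -/
def Amix {n M : ℕ} (A : Fin M → Matrix (Fin n) (Fin n) ℝ) (w : Fin M → ℝ) :
    Matrix (Fin n) (Fin n) ℝ :=
  ∑ i, w i • A i

/-- `x` is a solution of the difference inclusion generated by `A₁, …, A_M`. -/
def IsInclusionSolution {n M : ℕ} (A : Fin M → Matrix (Fin n) (Fin n) ℝ)
    (x : ℕ → Fin n → ℝ) : Prop :=
  ∃ w : ℕ → Fin M → ℝ, (∀ k, InSimplex (w k)) ∧
    ∀ k, x (k + 1) = (Amix A (w k)) *ᵥ (x k)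

/-- Weak convergence: every solution of the difference inclusion has a limit. -/
def WeaklyConvergent {n M : ℕ} (A : Fin M → Matrix (Fin n) (Fin n) ℝ) : Prop :=
  ∀ x : ℕ → Fin n → ℝ, IsInclusionSolution A x →
    ∃ xbar : Fin n → ℝ, Tendsto x atTop (nhds xbar)

/-- Strong convergence: every solution converges to a point of `⋂ᵢ ker(Aᵢ − I)`. -/
def StronglyConvergent {n M : ℕ} (A : Fin M → Matrix (Fin n) (Fin n) ℝ) : Prop :=
  ∀ x : ℕ → Fin n → ℝ, IsInclusionSolution A x →
    ∃ xbar : Fin n → ℝ, (∀ i, (A i - 1) *ᵥ xbar = 0) ∧ Tendsto x atTop (nhds xbar)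

/-!
Weak convergence forces the orbit `{A_w x}` of every `x` under all finite products `A_w` of the
generators to be bounded, and then `N x = sup_w ‖A_w x‖` is the required norm: it dominates `‖x‖`
and cannot increase under any `Aᵢ`.

The vectors with bounded orbit form a subspace `V`; it is finite-dimensional, hence complete, so by
Banach–Steinhaus `‖A_w v‖ ≤ C ‖v‖` on `V`. If some `y ∉ V`, then from `y` one reaches points outside
`V` of arbitrarily large norm: otherwise a word either stays outside `V`, where norms are at most
`K`, or enters `V` in one step from such a point, after which norms stay below `C L K`
(`L` bounding the `‖Aᵢ‖`), and the orbit of `y` would be bounded. Concatenating such escaping words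
gives a single switching sequence along which the solution is unbounded, hence divergent.
-/

open Set

theorem exists_seq_map_range_eq_of_isPrefix {α : Type*} {P : ℕ → List α}
    (hP : ∀ k, P k <+: P (k + 1)) (hlen : ∀ k, k ≤ (P k).length) :
    ∃ σ : ℕ → α, ∀ k, (List.range (P k).length).map σ = P k := by
  have hmono : ∀ {k m}, k ≤ m → P k <+: P m := fun hkm =>
    Nat.le_induction (List.prefix_refl _) (fun m _ ih => ih.trans (hP m)) _ hkm
  refine ⟨fun t => (P (t + 1))[t]'(hlen (t + 1)), fun k => List.ext_getElem (by simp) ?_⟩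
  intro t _ ht
  simp only [List.getElem_map, List.getElem_range]
  rw [(hmono (le_max_left (t + 1) k)).getElem, (hmono (le_max_right (t + 1) k)).getElem ht]

namespace SwitchedSystem

variable {𝕜 E ι : Type*} [NontriviallyNormedField 𝕜] [NormedAddCommGroup E] [NormedSpace 𝕜 E]
  (T : ι → E →L[𝕜] E)

def wordOp (w : List ι) : E →L[𝕜] E :=
  (w.reverse.map T).prod

@[simp]
theorem wordOp_nil : wordOp T [] = 1 := rfl

@[simp]
theorem wordOp_cons (i : ι) (w : List ι) : wordOp T (i :: w) = wordOp T w * T i := by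
  simp [wordOp]

theorem wordOp_append (u v : List ι) : wordOp T (u ++ v) = wordOp T v * wordOp T u := by
  simp [wordOp]

def boundedOrbits : Submodule 𝕜 E where
  carrier := {x | BddAbove (range fun w => ‖wordOp T w x‖)}
  zero_mem' := ⟨0, by simp [upperBounds]⟩
  add_mem' := by
    rintro x y ⟨Cx, hx⟩ ⟨Cy, hy⟩
    refine ⟨Cx + Cy, forall_mem_range.2 fun w => ?_⟩
    rw [map_add]
    exact (norm_add_le _ _).trans (add_le_add (hx ⟨w, rfl⟩) (hy ⟨w, rfl⟩))
  smul_mem' := by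
    rintro c x ⟨C, hC⟩
    refine ⟨‖c‖ * C, forall_mem_range.2 fun w => ?_⟩
    rw [map_smul, norm_smul]
    exact mul_le_mul_of_nonneg_left (hC ⟨w, rfl⟩) (norm_nonneg c)

def switchingOrbit (σ : ℕ → ι) (x : E) (t : ℕ) : E :=
  wordOp T ((List.range t).map σ) x

theorem switchingOrbit_succ (σ : ℕ → ι) (x : E) (t : ℕ) :
    switchingOrbit T σ x (t + 1) = T (σ t) (switchingOrbit T σ x t) := by
  simp [switchingOrbit, List.range_succ, wordOp_append]

noncomputable def orbitNorm (x : E) : ℝ :=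
  ⨆ w, ‖wordOp T w x‖

theorem norm_le_orbitNorm {x : E} (hx : x ∈ boundedOrbits T) : ‖x‖ ≤ orbitNorm T x := by
  simpa [orbitNorm] using le_ciSup hx ([] : List ι)

theorem orbitNorm_zero : orbitNorm T 0 = 0 := by
  simp [orbitNorm]

theorem orbitNorm_eq_zero_iff {x : E} (hx : x ∈ boundedOrbits T) : orbitNorm T x = 0 ↔ x = 0 :=
  ⟨fun h0 => norm_le_zero_iff.1 (h0 ▸ norm_le_orbitNorm T hx), fun h0 => h0 ▸ orbitNorm_zero T⟩

theorem orbitNorm_smul (c : 𝕜) (x : E) : orbitNorm T (c • x) = ‖c‖ * orbitNorm T x := by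
  simp only [orbitNorm, map_smul, norm_smul, Real.mul_iSup_of_nonneg (norm_nonneg c)]

theorem orbitNorm_add_le {x y : E} (hx : x ∈ boundedOrbits T) (hy : y ∈ boundedOrbits T) :
    orbitNorm T (x + y) ≤ orbitNorm T x + orbitNorm T y :=
  ciSup_le fun w => by
    rw [map_add]
    exact (norm_add_le _ _).trans (add_le_add (le_ciSup hx w) (le_ciSup hy w))

theorem orbitNorm_apply_le {x : E} (hx : x ∈ boundedOrbits T) (i : ι) :
    orbitNorm T (T i x) ≤ orbitNorm T x :=
  ciSup_le fun w => by simpa [orbitNorm] using le_ciSup hx (i :: w)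

theorem norm_wordOp_le_of_forall_escape_le {C L K : ℝ} (hC₀ : 0 ≤ C)
    (hC : ∀ v ∈ boundedOrbits T, ∀ w, ‖wordOp T w v‖ ≤ C * ‖v‖) (hL : ∀ i, ‖T i‖ ≤ L)
    (w : List ι) {z : E} (hz : z ∉ boundedOrbits T)
    (hK : ∀ u, wordOp T u z ∉ boundedOrbits T → ‖wordOp T u z‖ ≤ K) :
    ‖wordOp T w z‖ ≤ max K (C * (L * K)) := by
  induction w generalizing z with
  | nil => simpa using (hK [] (by simpa using hz)).trans (le_max_left _ _)
  | cons i w ih =>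
    have hzK : ‖z‖ ≤ K := by simpa using hK [] (by simpa using hz)
    rw [wordOp_cons, mul_apply_eq_comp]
    by_cases hi : T i z ∈ boundedOrbits T
    · calc ‖wordOp T w (T i z)‖ ≤ C * ‖T i z‖ := hC _ hi w
        _ ≤ C * (L * K) := by
          gcongr
          exact ((T i).le_of_opNorm_le (hL i) z).trans
            (mul_le_mul_of_nonneg_left hzK ((norm_nonneg _).trans (hL i)))
        _ ≤ max K (C * (L * K)) := le_max_right _ _
    · exact ih hi fun u => by simpa using hK (i :: u)

variable [CompleteSpace 𝕜] [FiniteDimensional 𝕜 E]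

theorem exists_norm_wordOp_le_of_mem_boundedOrbits :
    ∃ C, 0 ≤ C ∧ ∀ v ∈ boundedOrbits T, ∀ w, ‖wordOp T w v‖ ≤ C * ‖v‖ := by
  have := FiniteDimensional.complete 𝕜 (boundedOrbits T)
  obtain ⟨C, hC⟩ := banach_steinhaus
    (g := fun w => (wordOp T w).comp (boundedOrbits T).subtypeL) fun v => by
      obtain ⟨C, hC⟩ := v.2
      exact ⟨C, fun w => hC ⟨w, rfl⟩⟩
  refine ⟨C, (norm_nonneg _).trans (hC []), fun v hv w => ?_⟩
  exact ((wordOp T w).comp _).le_of_opNorm_le (hC w) (⟨v, hv⟩ : boundedOrbits T)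

theorem exists_escape {L : ℝ} (hL : ∀ i, ‖T i‖ ≤ L) {y : E} (hy : y ∉ boundedOrbits T) (K : ℝ) :
    ∃ w, wordOp T w y ∉ boundedOrbits T ∧ K < ‖wordOp T w y‖ := by
  obtain ⟨C, hC₀, hC⟩ := exists_norm_wordOp_le_of_mem_boundedOrbits T
  by_contra! hK
  exact hy ⟨_, forall_mem_range.2 fun w => norm_wordOp_le_of_forall_escape_le T hC₀ hC hL w hy hK⟩

theorem exists_switchingOrbit_not_bddAbove {L : ℝ} (hL : ∀ i, ‖T i‖ ≤ L) {x : E}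
    (hx : x ∉ boundedOrbits T) :
    ∃ σ : ℕ → ι, ¬ BddAbove (range fun t => ‖switchingOrbit T σ x t‖) := by
  -- Escaping beyond `‖y‖` makes each word nonempty; escaping beyond `k` makes the orbit unbounded.
  choose W hWV hWnorm using fun (y : {y // y ∉ boundedOrbits T}) (k : ℕ) =>
    exists_escape T hL y.2 (max k ‖(y : E)‖)
  let y : ℕ → {y // y ∉ boundedOrbits T} := fun k => Nat.rec ⟨x, hx⟩ (fun k yk => ⟨_, hWV yk k⟩) k
  let P : ℕ → List ι := fun k => ((List.range k).map fun j => W (y j) j).flatten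
  have hP : ∀ k, P (k + 1) = P k ++ W (y k) k := fun k => by simp [P, List.range_succ]
  have hPy : ∀ k, wordOp T (P k) x = (y k).1 := by
    intro k
    induction k with
    | zero => simp [P, y]
    | succ k ih => rw [hP, wordOp_append, mul_apply_eq_comp, ih]
  have hlen : ∀ k, k ≤ (P k).length := by
    intro k
    induction k with
    | zero => simp
    | succ k ih =>
      have hW : W (y k) k ≠ [] := fun hnil => by simpa [hnil] using hWnorm (y k) k
      rw [hP, List.length_append]
      have := List.length_pos_iff.2 hW
      omega
  obtain ⟨σ, hσ⟩ := exists_seq_map_range_eq_of_isPrefix (fun k => hP k ▸ List.prefix_append _ _) hlen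
  refine ⟨σ, fun ⟨B, hB⟩ => ?_⟩
  obtain ⟨k, hk⟩ := exists_nat_gt B
  have hle : ‖(y (k + 1)).1‖ ≤ B := by
    simpa only [switchingOrbit, hσ, hPy] using hB ⟨(P (k + 1)).length, rfl⟩
  have hgt : (k : ℝ) < ‖(y (k + 1)).1‖ := (le_max_left _ _).trans_lt (hWnorm (y k) k)
  linarith

theorem boundedOrbits_eq_top_of_bddAbove_switchingOrbit (hT : BddAbove (range fun i => ‖T i‖))
    (h : ∀ σ x, BddAbove (range fun t => ‖switchingOrbit T σ x t‖)) : boundedOrbits T = ⊤ := by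
  obtain ⟨L, hL⟩ := hT
  refine eq_top_iff.2 fun x _ => by_contra fun hx => ?_
  obtain ⟨σ, hσ⟩ := exists_switchingOrbit_not_bddAbove T (fun i => hL ⟨i, rfl⟩) hx
  exact hσ (h σ x)

end SwitchedSystem

open SwitchedSystem

theorem inSimplex_single {M : ℕ} (i : Fin M) : InSimplex (Pi.single i (1 : ℝ)) :=
  ⟨fun j => by by_cases h : j = i <;> simp [h], by simp⟩

theorem amix_single {n M : ℕ} (A : Fin M → Matrix (Fin n) (Fin n) ℝ) (i : Fin M) :
    Amix A (Pi.single i 1) = A i := by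
  simp [Amix, Pi.single_apply]

theorem isInclusionSolution_of_switching {n M : ℕ} (A : Fin M → Matrix (Fin n) (Fin n) ℝ)
    (σ : ℕ → Fin M) {x : ℕ → Fin n → ℝ} (hx : ∀ k, x (k + 1) = A (σ k) *ᵥ x k) :
    IsInclusionSolution A x :=
  ⟨fun k => Pi.single (σ k) 1, fun _ => inSimplex_single _, fun k => by rw [amix_single, hx]⟩

/-- weak convergence implies the existence of a weak convex Lyapunov
function, namely a norm `N` on `ℝⁿ` that is non-increasing along every `Aᵢ`. -/
theorem weak_convergence_implies_wCLF
    (n M : ℕ) (A : Fin M → Matrix (Fin n) (Fin n) ℝ)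
    (h : WeaklyConvergent A) :
    ∃ N : (Fin n → ℝ) → ℝ,
      (∀ x, N x = 0 ↔ x = 0) ∧
      (∀ (a : ℝ) (x : Fin n → ℝ), N (a • x) = |a| * N x) ∧
      (∀ x y : Fin n → ℝ, N (x + y) ≤ N x + N y) ∧
      (∀ (i : Fin M) (x : Fin n → ℝ), N ((A i) *ᵥ x) ≤ N x) := by
  let T : Fin M → (Fin n → ℝ) →L[ℝ] (Fin n → ℝ) :=
    fun i => LinearMap.toContinuousLinearMap (A i).mulVecLin
  have hT : ∀ i x, T i x = A i *ᵥ x := fun _ _ => rfl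
  have hbdd : ∀ σ x, BddAbove (range fun t => ‖switchingOrbit T σ x t‖) := fun σ x => by
    obtain ⟨_, hlim⟩ := h (switchingOrbit T σ x)
      (isInclusionSolution_of_switching A σ fun t => by rw [switchingOrbit_succ, hT])
    exact hlim.norm.bddAbove_range
  have hmem : ∀ x, x ∈ boundedOrbits T := fun x =>
    boundedOrbits_eq_top_of_bddAbove_switchingOrbit T (finite_range _).bddAbove hbdd ▸
      Submodule.mem_top
  refine ⟨orbitNorm T, fun x => orbitNorm_eq_zero_iff T (hmem x), fun a x => ?_,
    fun x y => orbitNorm_add_le T (hmem x) (hmem y), fun i x => ?_⟩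
  · rw [orbitNorm_smul, Real.norm_eq_abs]
  · simpa only [hT] using orbitNorm_apply_le T (hmem x) i
end
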